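/- arXiv:2206.11094 — 3 statements merged into one kernel-verified Lean document; each statement's English description precedes it below -/
import Mathlib

section
/- For every probability density f on the positive reals that is weakly decreasing and left continuous, there exists a probability measure ν on (0,∞) such that f(x) = ∫_{(0,∞)} (1/y)·1_{[0,y]}(x) ν(dy) for all x > 0; i.e., every distribution on (0,∞) with weakly decreasing density is a mixture of uniform distributions on intervals [0,y]. -/
/-!
Viewed on the order dual of `(0, ∞)`, the function `f` is monotone and right continuous, so it is
a Stieltjes function; its measure `ρ` satisfies `ρ [y, ∞) = f y` because integrability forces
`f → 0` at infinity. Since `(1 / y) 1_{[0, y]}(x) = y⁻¹ 1_{[x, ∞)}(y)`, the measure `ν = y • ρ` does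
the job: `∫_{[x, ∞)} y⁻¹ dν = ρ [x, ∞) = f x`, and by the layer-cake formula
`ν (0, ∞) = ∫₀^∞ ρ [t, ∞) dt = ∫₀^∞ f = 1`.
-/

open MeasureTheory Set Filter Topology

instance Set.OrdConnected.compactIccSpace {α : Type*} [Preorder α] [TopologicalSpace α]
    [CompactIccSpace α] (s : Set α) [s.OrdConnected] : CompactIccSpace s :=
  .mk' fun {a b} _ => by
    rw [Subtype.isCompact_iff, image_subtype_val_Icc]
    exact isCompact_Icc

theorem AntitoneOn.tendsto_atTop_zero_of_integrableOn {f : ℝ → ℝ} {a : ℝ}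
    (hf : AntitoneOn f (Ioi a)) (hnn : ∀ x ∈ Ioi a, 0 ≤ f x) (hint : IntegrableOn f (Ioi a)) :
    Tendsto f atTop (𝓝 0) := by
  rw [← tendsto_comp_val_Ioi_atTop]
  have hanti : Antitone fun x : Ioi a => f x := fun x y hxy => hf x.2 y.2 hxy
  obtain hbot | ⟨l, hl⟩ := tendsto_atTop_of_antitone hanti
  · obtain ⟨x, hx⟩ := (hbot.eventually (eventually_lt_atBot 0)).exists
    exact absurd (hnn x x.2) hx.not_ge
  have hl_nonneg : 0 ≤ l := ge_of_tendsto' hl fun x => hnn x x.2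
  have hl_le : ∀ x ∈ Ioi a, l ≤ f x := fun x hx => hanti.le_of_tendsto hl ⟨x, hx⟩
  suffices l = 0 by rwa [← this]
  by_contra hl0
  have hconst : IntegrableOn (fun _ => l) (Ioi a) := by
    refine hint.mono' aestronglyMeasurable_const ?_
    filter_upwards [ae_restrict_mem measurableSet_Ioi] with x hx
    rw [Real.norm_of_nonneg hl_nonneg]
    exact hl_le x hx
  simp [integrableOn_const_iff, hl0] at hconst

def StieltjesFunction.ofAntitone {α : Type*} [LinearOrder α] [TopologicalSpace α] (g : α → ℝ)
    (hg : Antitone g) (hlc : ∀ x, ContinuousWithinAt g (Iic x) x) : StieltjesFunction αᵒᵈ where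
  toFun t := g (OrderDual.ofDual t)
  mono' _ _ h := hg h
  right_continuous' t := hlc (OrderDual.ofDual t)

theorem exists_measure_Ici_eq_ofReal {f : ℝ → ℝ} (hf : AntitoneOn f (Ioi 0))
    (hlc : ∀ x ∈ Ioi 0, ContinuousWithinAt f (Iic x) x) (hlim : Tendsto f atTop (𝓝 0)) :
    ∃ ρ : Measure ℝ, ρ (Iic 0) = 0 ∧ ∀ x ∈ Ioi 0, ρ (Ici x) = ENNReal.ofReal (f x) := by
  let g : StieltjesFunction (Ioi (0:ℝ))ᵒᵈ :=
    .ofAntitone (fun x => f x) (fun x y hxy => hf x.2 y.2 hxy)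
      fun x => (hlc x x.2).comp continuous_subtype_val.continuousWithinAt fun _ hy => hy
  let e : (Ioi (0:ℝ))ᵒᵈ → ℝ := fun t => (OrderDual.ofDual t).1
  have he : Measurable e := measurable_subtype_coe
  refine ⟨g.measure.map e, ?_, fun x hx => ?_⟩
  · rw [Measure.map_apply he measurableSet_Iic]
    convert measure_empty (μ := g.measure)
    exact eq_empty_of_forall_notMem fun t (ht : e t ≤ 0) => (OrderDual.ofDual t).2.not_ge ht
  · have hpre : e ⁻¹' Ici x = Iic (OrderDual.toDual ⟨x, hx⟩) := rfl
    rw [Measure.map_apply he measurableSet_Ici, hpre,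
      g.measure_Iic (tendsto_comp_val_Ioi_atTop.2 hlim), sub_zero]
    rfl

theorem lintegral_ofReal_eq_lintegral_measure_Ici (ρ : Measure ℝ) (h : ρ (Iio 0) = 0) :
    ∫⁻ y, ENNReal.ofReal y ∂ρ = ∫⁻ t in Ioi 0, ρ (Ici t) :=
  lintegral_eq_lintegral_meas_le ρ
    (ae_iff.2 <| measure_mono_null (fun y (hy : ¬(0:ℝ) ≤ y) => not_le.1 hy) h) aemeasurable_id

theorem setLIntegral_inv_withDensity_ofReal (ρ : Measure ℝ) {s : Set ℝ} (hs : MeasurableSet s)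
    (hpos : s ⊆ Ioi 0) :
    ∫⁻ y in s, ENNReal.ofReal y⁻¹ ∂ρ.withDensity (fun y => ENNReal.ofReal y) = ρ s := by
  rw [setLIntegral_withDensity_eq_setLIntegral_mul _ ENNReal.measurable_ofReal
    measurable_inv.ennreal_ofReal hs]
  calc ∫⁻ y in s, ENNReal.ofReal y * ENNReal.ofReal y⁻¹ ∂ρ = ∫⁻ _ in s, 1 ∂ρ :=
        setLIntegral_congr_fun hs fun y hy => by
          rw [← ENNReal.ofReal_mul (hpos hy).le, mul_inv_cancel₀ (hpos hy).ne', ENNReal.ofReal_one]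
    _ = ρ s := by rw [setLIntegral_const, one_mul]

theorem setIntegral_Ioi_mul_indicator_Icc (ν : Measure ℝ) (g : ℝ → ℝ) {x : ℝ} (hx : 0 < x) :
    ∫ y in Ioi 0, g y * (Icc 0 y).indicator (fun _ => (1:ℝ)) x ∂ν = ∫ y in Ici x, g y ∂ν := by
  have hind : ∀ y, g y * (Icc 0 y).indicator (fun _ => (1:ℝ)) x = (Ici x).indicator g y := by
    intro y
    by_cases hxy : x ≤ y <;> simp [hx.le, hxy]
  simp_rw [hind]
  rw [setIntegral_indicator measurableSet_Ici, inter_eq_right.2 (Ici_subset_Ioi.2 hx)]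

/-- Every distribution on (0,∞) with a weakly decreasing, left continuous density
is a mixture of uniform distributions on intervals [0,y]. -/
theorem mixture_of_uniforms_of_decreasing_density
    (f : ℝ → ℝ)
    (hnn : ∀ x, 0 < x → 0 ≤ f x)
    (hdec : ∀ x y, 0 < x → x ≤ y → f y ≤ f x)
    (hlc : ∀ x, 0 < x → Filter.Tendsto f (nhdsWithin x (Set.Iio x)) (nhds (f x)))
    (hint : ∫ x in Set.Ioi (0:ℝ), f x = 1) :
    ∃ ν : Measure ℝ, IsProbabilityMeasure ν ∧ ν (Set.Iic 0) = 0 ∧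
      ∀ x, 0 < x →
        f x = ∫ y in Set.Ioi (0:ℝ),
          (1 / y) * Set.indicator (Set.Icc 0 y) (fun _ => (1:ℝ)) x ∂ν := by
  have hanti : AntitoneOn f (Ioi 0) := fun x hx _ _ hxy => hdec x _ hx hxy
  have hf : IntegrableOn f (Ioi 0) := Integrable.of_integral_ne_zero (by simp [hint])
  obtain ⟨ρ, hρ0, hρ⟩ := exists_measure_Ici_eq_ofReal hanti
    (fun x hx => continuousWithinAt_Iio_iff_Iic.1 (hlc x hx))
    (hanti.tendsto_atTop_zero_of_integrableOn hnn hf)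
  refine ⟨ρ.withDensity fun y => ENNReal.ofReal y, ⟨?_⟩,
    withDensity_absolutelyContinuous _ _ hρ0, fun x hx => ?_⟩
  · rw [withDensity_apply _ MeasurableSet.univ, Measure.restrict_univ,
      lintegral_ofReal_eq_lintegral_measure_Ici ρ (measure_mono_null Iio_subset_Iic_self hρ0),
      setLIntegral_congr_fun measurableSet_Ioi hρ,
      ← ofReal_integral_eq_lintegral_ofReal hf (ae_restrict_of_forall_mem measurableSet_Ioi hnn),
      hint, ENNReal.ofReal_one]
  · have hinv_nonneg : 0 ≤ᵐ[(ρ.withDensity fun y => ENNReal.ofReal y).restrict (Ici x)] (·⁻¹) :=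
      ae_restrict_of_forall_mem measurableSet_Ici fun y hy => inv_nonneg.2 (hx.le.trans hy)
    simp only [one_div]
    rw [setIntegral_Ioi_mul_indicator_Icc _ _ hx,
      integral_eq_lintegral_of_nonneg_ae hinv_nonneg measurable_inv.aestronglyMeasurable,
      setLIntegral_inv_withDensity_ofReal ρ measurableSet_Ici (Ici_subset_Ioi.2 hx), hρ x hx,
      ENNReal.toReal_ofReal (hnn x hx)]
end

section
/- The central chi-squared distribution with 3 degrees of freedom is not a mixture of noncentral chi-squared distributions with one degree of freedom: there is no probability measure ν on [0,∞) with χ²_3 = ∫ χ²_1(θ) ν(dθ). -/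
/-!
Near the origin the density of χ²₃ is `x` times that of χ²₁, so on `(0, ε]` we have
`χ²₃ ≤ ε • χ²₁`. On the other hand the `k = 0` term of its Poisson series shows
`χ²₁(θ) ≥ e^{-θ/2} • χ²₁`, so any mixture `∫ χ²₁(θ) ν(dθ)` over `θ ≥ 0` dominates `c • χ²₁` with
`c = ∫ e^{-θ/2} ν(dθ) > 0`. If χ²₃ were such a mixture, then `c ≤ ε` for every `ε > 0`.
-/

open MeasureTheory Set

/-- Density of the central chi-squared distribution with m degrees of freedom. -/
noncomputable def chiDensity (m : ℕ) (x : ℝ) : ℝ :=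
  x ^ ((m : ℝ) / 2 - 1) * Real.exp (-x / 2) / (2 ^ ((m : ℝ) / 2) * Real.Gamma ((m : ℝ) / 2))

/-- The central chi-squared distribution with m degrees of freedom as a measure on ℝ. -/
noncomputable def chiSq (m : ℕ) : Measure ℝ :=
  (volume.restrict (Set.Ioi (0:ℝ))).withDensity (fun x => ENNReal.ofReal (chiDensity m x))

/-- The noncentral chi-squared distribution with 1 degree of freedom and
noncentrality parameter θ. -/
noncomputable def ncChiSq1 (θ : ℝ) : Measure ℝ :=
  (volume.restrict (Set.Ioi (0:ℝ))).withDensity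
    (fun x => ENNReal.ofReal
      (∑' k : ℕ, Real.exp (-θ / 2) * (θ / 2) ^ k / (Nat.factorial k) * chiDensity (2 * k + 1) x))

open Real ProbabilityTheory
open scoped Nat ENNReal

@[fun_prop]
lemma measurable_chiDensity (m : ℕ) : Measurable (chiDensity m) := by
  unfold chiDensity
  fun_prop

lemma chiDensity_nonneg (m : ℕ) {x : ℝ} (hx : 0 ≤ x) : 0 ≤ chiDensity m x := by
  have := Gamma_nonneg_of_nonneg (s := (m : ℝ) / 2) (by positivity)
  unfold chiDensity
  positivity

lemma chiDensity_pos {m : ℕ} (hm : 0 < m) {x : ℝ} (hx : 0 < x) : 0 < chiDensity m x := by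
  have := Gamma_pos_of_pos (s := (m : ℝ) / 2) (by positivity)
  unfold chiDensity
  positivity

lemma chiDensity_add_two {m : ℕ} (hm : 0 < m) {x : ℝ} (hx : 0 < x) :
    chiDensity (m + 2) x = x / m * chiDensity m x := by
  have hm' : (m : ℝ) / 2 ≠ 0 := by positivity
  have hs : ((m + 2 : ℕ) : ℝ) / 2 = (m : ℝ) / 2 + 1 := by push_cast; ring
  unfold chiDensity
  rw [hs, Gamma_add_one hm', rpow_add_one two_ne_zero, add_sub_cancel_right,
    rpow_sub_one hx.ne']
  have := Gamma_pos_of_pos (s := (m : ℝ) / 2) (by positivity)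
  field_simp

lemma chiDensity_odd_le (k : ℕ) {x : ℝ} (hx : 0 < x) :
    chiDensity (2 * k + 1) x ≤ x ^ k * chiDensity 1 x := by
  induction k with
  | zero => simp
  | succ k ih =>
    calc chiDensity (2 * (k + 1) + 1) x = x / (2 * k + 1 : ℕ) * chiDensity (2 * k + 1) x :=
          chiDensity_add_two (by omega) hx
      _ ≤ x * (x ^ k * chiDensity 1 x) := by
          gcongr
          · exact chiDensity_nonneg _ hx.le
          · exact div_le_self hx.le (by norm_cast; omega)
      _ = x ^ (k + 1) * chiDensity 1 x := by ring

lemma chiSq_eq_restrict_gammaMeasure (m : ℕ) :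
    chiSq m = (gammaMeasure (m / 2) (1 / 2)).restrict (Ioi 0) := by
  rw [gammaMeasure, restrict_withDensity measurableSet_Ioi, chiSq]
  refine withDensity_congr_ae ((ae_restrict_iff' measurableSet_Ioi).2 (ae_of_all _ fun x hx => ?_))
  rw [gammaPDF, gammaPDFReal, if_pos (le_of_lt hx)]
  unfold chiDensity
  dsimp only
  rw [div_rpow zero_le_one zero_le_two, one_rpow]
  ring_nf

lemma isFiniteMeasure_chiSq {m : ℕ} (hm : 0 < m) : IsFiniteMeasure (chiSq m) := by
  have := isProbabilityMeasure_gammaMeasure (a := m / 2) (r := 1 / 2) (by positivity) (by norm_num)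
  rw [chiSq_eq_restrict_gammaMeasure]
  infer_instance

lemma chiSq_Ioo_pos {m : ℕ} (hm : 0 < m) {ε : ℝ} (hε : 0 < ε) : 0 < chiSq m (Ioo 0 ε) := by
  have hsupp : Ioo 0 ε ⊆ Function.support fun x => ENNReal.ofReal (chiDensity m x) :=
    fun x hx => (ENNReal.ofReal_pos.2 (chiDensity_pos hm hx.1)).ne'
  rw [chiSq, withDensity_apply _ measurableSet_Ioo, Measure.restrict_restrict measurableSet_Ioo,
    inter_eq_left.2 Ioo_subset_Ioi_self, setLIntegral_pos_iff (by fun_prop),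
    inter_eq_right.2 hsupp, volume_Ioo]
  simpa using hε

lemma chiSq_three_le_mul_chiSq_one {ε : ℝ} {s : Set ℝ} (hs : MeasurableSet s)
    (hsε : s ⊆ Iic ε) : chiSq 3 s ≤ ENNReal.ofReal ε * chiSq 1 s := by
  rw [chiSq, chiSq, withDensity_apply _ hs, withDensity_apply _ hs,
    ← lintegral_const_mul' _ _ ENNReal.ofReal_ne_top, Measure.restrict_restrict hs]
  refine setLIntegral_mono (by fun_prop) fun x ⟨hxs, hx⟩ => ?_
  have h3 : chiDensity 3 x = x * chiDensity 1 x := by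
    simpa using chiDensity_add_two one_pos hx
  have hxε : x ≤ ε := hsε hxs
  rw [h3, ← ENNReal.ofReal_mul (hx.out.le.trans hxε)]
  exact ENNReal.ofReal_le_ofReal (mul_le_mul_of_nonneg_right hxε (chiDensity_nonneg 1 hx.out.le))

lemma eq_zero_of_smul_chiSq_one_le_chiSq_three {c : ℝ≥0∞} (h : c • chiSq 1 ≤ chiSq 3) :
    c = 0 := by
  have := isFiniteMeasure_chiSq one_pos
  refine le_antisymm (ENNReal.le_of_forall_pos_le_add fun ε hε _ => ?_) bot_le
  have hpos : chiSq 1 (Ioo 0 ε) ≠ 0 := (chiSq_Ioo_pos one_pos hε).ne'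
  have hle : c * chiSq 1 (Ioo 0 ε) ≤ ε * chiSq 1 (Ioo 0 ε) := by
    have := (h (Ioo 0 ε)).trans (chiSq_three_le_mul_chiSq_one (ε := ε) measurableSet_Ioo
      (Ioo_subset_Ioc_self.trans Ioc_subset_Iic_self))
    rwa [Measure.smul_apply, smul_eq_mul, ENNReal.ofReal_coe_nnreal] at this
  rw [zero_add]
  exact (ENNReal.mul_le_mul_iff_left hpos (measure_ne_top _ _)).1 hle

lemma summable_ncChiSq1_series {θ x : ℝ} (hθ : 0 ≤ θ) (hx : 0 < x) :
    Summable fun k : ℕ =>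
      exp (-θ / 2) * (θ / 2) ^ k / k ! * chiDensity (2 * k + 1) x := by
  refine .of_nonneg_of_le (fun k => by have := chiDensity_nonneg (2 * k + 1) hx.le; positivity)
    (fun k => ?_)
    ((summable_pow_div_factorial (θ * x / 2)).mul_left (exp (-θ / 2) * chiDensity 1 x))
  calc exp (-θ / 2) * (θ / 2) ^ k / k ! * chiDensity (2 * k + 1) x
      ≤ exp (-θ / 2) * (θ / 2) ^ k / k ! * (x ^ k * chiDensity 1 x) := by
        gcongr; exact chiDensity_odd_le k hx
    _ = exp (-θ / 2) * chiDensity 1 x * ((θ * x / 2) ^ k / k !) := by ring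

lemma exp_mul_chiDensity_one_le_tsum {θ x : ℝ} (hθ : 0 ≤ θ) (hx : 0 < x) :
    exp (-θ / 2) * chiDensity 1 x ≤
      ∑' k : ℕ, exp (-θ / 2) * (θ / 2) ^ k / k ! * chiDensity (2 * k + 1) x := by
  simpa using (summable_ncChiSq1_series hθ hx).le_tsum 0 fun k _ => by
    have := chiDensity_nonneg (2 * k + 1) hx.le; positivity

lemma ofReal_exp_smul_chiSq_one_le_ncChiSq1 {θ : ℝ} (hθ : 0 ≤ θ) :
    ENNReal.ofReal (exp (-θ / 2)) • chiSq 1 ≤ ncChiSq1 θ := by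
  rw [chiSq, ncChiSq1, ← withDensity_smul' _ _ ENNReal.ofReal_ne_top]
  refine withDensity_mono ((ae_restrict_iff' measurableSet_Ioi).2 (ae_of_all _ fun x hx => ?_))
  rw [Pi.smul_apply, smul_eq_mul, ← ENNReal.ofReal_mul (exp_pos _).le]
  exact ENNReal.ofReal_le_ofReal (exp_mul_chiDensity_one_le_tsum hθ hx)

lemma lintegral_mul_le_lintegral_of_ae_smul_le {α β : Type*} [MeasurableSpace α]
    [MeasurableSpace β] {μ : Measure α} {ν : Measure β} {κ : β → Measure α} {c : β → ℝ≥0∞}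
    (hc : Measurable c) (h : ∀ᵐ θ ∂ν, c θ • μ ≤ κ θ) (s : Set α) :
    (∫⁻ θ, c θ ∂ν) * μ s ≤ ∫⁻ θ, κ θ s ∂ν := by
  rw [← lintegral_mul_const _ hc]
  exact lintegral_mono_ae (h.mono fun θ hθ => hθ s)

/-- χ²₃ is not a mixture of noncentral chi-squared distributions with one degree of
freedom. -/
theorem chiSq_three_not_mixture_of_noncentral_one :
    ¬ ∃ ν : Measure ℝ, IsProbabilityMeasure ν ∧ ν {θ : ℝ | θ < 0} = 0 ∧
      ∀ A : Set ℝ, MeasurableSet A →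
        chiSq 3 A = ∫⁻ θ, ncChiSq1 θ A ∂ν := by
  rintro ⟨ν, hν, hνneg, hmix⟩
  have hc : ∫⁻ θ, ENNReal.ofReal (exp (-θ / 2)) ∂ν ≠ 0 := by
    rw [← pos_iff_ne_zero, lintegral_pos_iff_support (by fun_prop)]
    simp [Function.support, exp_pos]
  have hnonneg : ∀ᵐ θ ∂ν, 0 ≤ θ := ae_iff.2 (by simpa only [not_le] using hνneg)
  refine hc (eq_zero_of_smul_chiSq_one_le_chiSq_three (Measure.le_iff.2 fun s hs => ?_))
  rw [hmix s hs]
  exact lintegral_mul_le_lintegral_of_ae_smul_le (by fun_prop)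
    (hnonneg.mono fun θ hθ => ofReal_exp_smul_chiSq_one_le_ncChiSq1 hθ) s
end

section
/- Let θ ∈ (0,1) have binary expansion θ = Σ_{k=1}^{K} 2^{−j_k} (K finite or infinite), set a_0 = 0 and a_m = Σ_{l=1}^m 2^{−j_l}. In the mixture model where T = a_m with probability (a_m − a_{m−1})/θ and, given T = a_m, X ~ unif(a_{m−1}, a_m), the conditioned moment estimator θ̃ = E[2X | T] = 2T − (gap at T) is unbiased for θ and has variance Var_θ(θ̃) = (1/θ) Σ_{m=1}^{K} a_m a_{m−1} (a_m − a_{m−1}). -/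
/-! For a monotone sequence rising from `a 0 = 0` to `θ`, the differences `a (m+1)^k - a m^k`
telescope to `θ^k`. With weights `(a (m+1) - a m) / θ`, the mean of `a (m+1) + a m` is thus
`θ² / θ`, and `(a' - a)(a' + a - θ)²` is the combination
`(a'³ - a³) + a' a (a' - a) - 2θ(a'² - a²) + θ²(a' - a)`, whose sum is `Σ a' a (a' - a)`. -/

open MeasureTheory Set

/-- The uniform distribution on the interval (a,b). -/
noncomputable def unif (a b : ℝ) : Measure ℝ :=
  (ENNReal.ofReal (b - a))⁻¹ • volume.restrict (Set.Ioo a b)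

/-- Joint law of (T, X): T takes the value m with probability (a(m+1) − a m)/θ and,
given T = m, X ~ unif(a m, a (m+1)). -/
noncomputable def jointLawUnif (θ : ℝ) (a : ℕ → ℝ) : Measure (ℕ × ℝ) :=
  Measure.sum (fun m : ℕ =>
    ENNReal.ofReal ((a (m + 1) - a m) / θ) • (Measure.dirac m).prod (unif (a m) (a (m + 1))))

open Filter Topology

lemma Monotone.hasSum_sub_of_tendsto {f : ℕ → ℝ} (hf : Monotone f) {L : ℝ}
    (hL : Tendsto f atTop (𝓝 L)) : HasSum (fun m => f (m + 1) - f m) (L - f 0) := by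
  rw [hasSum_iff_tendsto_nat_of_nonneg fun m => sub_nonneg.2 (hf m.le_succ)]
  simp_rw [Finset.sum_range_sub]
  exact hL.sub_const _

instance (a b : ℝ) : SFinite (unif a b) := by unfold unif; infer_instance

@[simp]
lemma unif_self (a : ℝ) : unif a a = 0 := by
  simp [unif]

lemma unif_univ_of_lt {a b : ℝ} (h : a < b) : unif a b univ = 1 := by
  simp only [unif, Measure.smul_apply, Measure.restrict_apply MeasurableSet.univ,
    univ_inter, Real.volume_Ioo, smul_eq_mul]
  exact ENNReal.inv_mul_cancel (by simpa using h) ENNReal.ofReal_ne_top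

lemma integral_id_unif {a b : ℝ} (h : a < b) : ∫ x, x ∂unif a b = (a + b) / 2 := by
  rw [unif, integral_smul_measure, ← integral_Ioc_eq_integral_Ioo,
    ← intervalIntegral.integral_of_le h.le, integral_id, ENNReal.toReal_inv,
    ENNReal.toReal_ofReal (sub_nonneg.2 h.le), smul_eq_mul]
  field_simp [sub_ne_zero.2 h.ne']
  ring

section jointLawUnif

variable {θ : ℝ} {a : ℕ → ℝ}

lemma lintegral_jointLawUnif_comp_fst (f : ℕ → ENNReal) :
    ∫⁻ p, f p.1 ∂jointLawUnif θ a
      = ∑' m, ENNReal.ofReal ((a (m + 1) - a m) / θ) * (f m * unif (a m) (a (m + 1)) univ) := by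
  rw [jointLawUnif, lintegral_sum_measure]
  congr 1 with m
  rw [lintegral_smul_measure, Measure.dirac_prod,
    lintegral_map (f := fun p : ℕ × ℝ => f p.1)
      ((measurable_from_top (f := f)).comp measurable_fst) measurable_prodMk_left]
  simp [lintegral_const]

lemma integral_jointLawUnif_comp_fst (hθ : 0 ≤ θ) (ha : Monotone a) {h : ℕ → ℝ}
    (hh : ∀ m, 0 ≤ h m) (hs : Summable fun m => (a (m + 1) - a m) / θ * h m) :
    ∫ p, h p.1 ∂jointLawUnif θ a = ∑' m, (a (m + 1) - a m) / θ * h m := by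
  have hw : ∀ m, 0 ≤ (a (m + 1) - a m) / θ := fun m =>
    div_nonneg (sub_nonneg.2 (ha m.le_succ)) hθ
  have hterm : ∀ m, ENNReal.ofReal ((a (m + 1) - a m) / θ)
      * (ENNReal.ofReal (h m) * unif (a m) (a (m + 1)) univ)
      = ENNReal.ofReal ((a (m + 1) - a m) / θ * h m) := by
    intro m
    rcases (ha m.le_succ).eq_or_lt with heq | hlt
    · simp [heq]
    · rw [unif_univ_of_lt hlt, mul_one, ENNReal.ofReal_mul (hw m)]
  rw [integral_eq_lintegral_of_nonneg_ae (f := fun p : ℕ × ℝ => h p.1)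
      (Eventually.of_forall fun p => hh p.1)
      ((measurable_from_top (f := h)).comp measurable_fst).aestronglyMeasurable,
    lintegral_jointLawUnif_comp_fst fun m => ENNReal.ofReal (h m), tsum_congr hterm,
    ← ENNReal.ofReal_tsum_of_nonneg (fun m => mul_nonneg (hw m) (hh m)) hs,
    ENNReal.toReal_ofReal (tsum_nonneg fun m => mul_nonneg (hw m) (hh m))]

end jointLawUnif

section Telescoping

variable {θ : ℝ} {a : ℕ → ℝ}

lemma hasSum_pow_sub_pow (ha0 : a 0 = 0) (ha : Monotone a) (hlim : Tendsto a atTop (𝓝 θ))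
    {k : ℕ} (hk : k ≠ 0) : HasSum (fun m => a (m + 1) ^ k - a m ^ k) (θ ^ k) := by
  have hmono : Monotone fun n => a n ^ k := fun i j hij =>
    pow_le_pow_left₀ (ha0 ▸ ha i.zero_le) (ha hij) k
  simpa [ha0, hk] using hmono.hasSum_sub_of_tendsto (hlim.pow k)

lemma hasSum_sub_div_mul_add (hθ : θ ≠ 0) (ha0 : a 0 = 0) (ha : Monotone a)
    (hlim : Tendsto a atTop (𝓝 θ)) :
    HasSum (fun m => (a (m + 1) - a m) / θ * (a (m + 1) + a m)) θ := by
  have h := (hasSum_pow_sub_pow ha0 ha hlim two_ne_zero).div_const θ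
  rw [sq θ, mul_div_cancel_right₀ θ hθ] at h
  exact h.congr_fun fun m => by ring

lemma hasSum_sub_div_mul_add_sub_sq (ha0 : a 0 = 0) (ha : Monotone a)
    (hlim : Tendsto a atTop (𝓝 θ)) :
    HasSum (fun m => (a (m + 1) - a m) / θ * (a (m + 1) + a m - θ) ^ 2)
      ((1 / θ) * ∑' m, a (m + 1) * a m * (a (m + 1) - a m)) := by
  have h1 := hasSum_pow_sub_pow ha0 ha hlim one_ne_zero
  have h2 := hasSum_pow_sub_pow ha0 ha hlim two_ne_zero
  have h3 := hasSum_pow_sub_pow ha0 ha hlim three_ne_zero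
  have hnonneg : ∀ n, 0 ≤ a n := fun n => ha0 ▸ ha n.zero_le
  -- `a'³ - a³ - a' a (a' - a) = (a' - a)(a'² + a²) ≥ 0`
  have hV : HasSum (fun m => a (m + 1) * a m * (a (m + 1) - a m))
      (∑' m, a (m + 1) * a m * (a (m + 1) - a m)) := by
    refine Summable.hasSum <| h3.summable.of_nonneg_of_le (fun m => ?_) (fun m => ?_)
    · exact mul_nonneg (mul_nonneg (hnonneg _) (hnonneg _)) (sub_nonneg.2 (ha m.le_succ))
    · nlinarith [mul_nonneg (sub_nonneg.2 (ha m.le_succ))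
        (add_nonneg (sq_nonneg (a (m + 1))) (sq_nonneg (a m)))]
  generalize ∑' m, a (m + 1) * a m * (a (m + 1) - a m) = V at hV ⊢
  have hcomb := (((h3.add hV).sub (h2.mul_left (2 * θ))).add (h1.mul_left (θ ^ 2))).div_const θ
  rw [show (θ ^ 3 + V - 2 * θ * θ ^ 2 + θ ^ 2 * θ ^ 1) / θ = 1 / θ * V by ring] at hcomb
  exact hcomb.congr_fun fun m => by ring

end Telescoping

theorem rao_blackwell_uniform_binary_general
    (θ : ℝ) (hθ : θ ∈ Set.Ioo (0:ℝ) 1)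
    (a : ℕ → ℝ) (ha0 : a 0 = 0) (hmono : Monotone a)
    (hlim : Filter.Tendsto a Filter.atTop (nhds θ)) :
    (∀ m : ℕ, (∫ x, 2 * x ∂unif (a m) (a (m + 1))) * (if a (m+1) = a m then 0 else 1)
        = (a (m + 1) + a m) * (if a (m+1) = a m then 0 else 1)) ∧
    (∫ p : ℕ × ℝ, (a (p.1 + 1) + a p.1) ∂jointLawUnif θ a) = θ ∧
    (∫ p : ℕ × ℝ, (a (p.1 + 1) + a p.1 - θ) ^ 2 ∂jointLawUnif θ a)
      = (1 / θ) * ∑' m : ℕ, a (m + 1) * a m * (a (m + 1) - a m) := by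
  obtain ⟨hθ0, -⟩ := hθ
  have hnonneg : ∀ n, 0 ≤ a n := fun n => ha0 ▸ hmono n.zero_le
  refine ⟨fun m => ?_, ?_, ?_⟩
  · split_ifs with hm
    · simp
    · rw [integral_const_mul, integral_id_unif ((hmono m.le_succ).lt_of_ne' hm)]
      ring
  · have hsum := hasSum_sub_div_mul_add hθ0.ne' ha0 hmono hlim
    rw [integral_jointLawUnif_comp_fst hθ0.le hmono
      (fun m => add_nonneg (hnonneg _) (hnonneg _)) hsum.summable, hsum.tsum_eq]
  · have hsum := hasSum_sub_div_mul_add_sub_sq ha0 hmono hlim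
    rw [integral_jointLawUnif_comp_fst hθ0.le hmono (fun m => sq_nonneg _) hsum.summable,
      hsum.tsum_eq]

/-- For θ ∈ (0,1) with binary expansion partial sums a_m, the conditioned moment
estimator θ̃ = E[2X | T], which equals a_m + a_{m−1} on {T = m}, is unbiased for θ and
has variance (1/θ) Σ_m a_m a_{m−1} (a_m − a_{m−1}). -/
theorem rao_blackwell_uniform_binary
    (θ : ℝ) (hθ : θ ∈ Set.Ioo (0:ℝ) 1)
    (a : ℕ → ℝ) (ha0 : a 0 = 0) (hmono : Monotone a)
    (hlim : Filter.Tendsto a Filter.atTop (nhds θ))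
    (hgap : ∀ m, a (m + 1) - a m = 0 ∨ ∃ j : ℕ, 1 ≤ j ∧ a (m + 1) - a m = ((2:ℝ) ^ j)⁻¹) :
    (∀ m : ℕ, (∫ x, 2 * x ∂unif (a m) (a (m + 1))) * (if a (m+1) = a m then 0 else 1)
        = (a (m + 1) + a m) * (if a (m+1) = a m then 0 else 1)) ∧
    (∫ p : ℕ × ℝ, (a (p.1 + 1) + a p.1) ∂jointLawUnif θ a) = θ ∧
    (∫ p : ℕ × ℝ, (a (p.1 + 1) + a p.1 - θ) ^ 2 ∂jointLawUnif θ a)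
      = (1 / θ) * ∑' m : ℕ, a (m + 1) * a m * (a (m + 1) - a m) :=
  rao_blackwell_uniform_binary_general θ hθ a ha0 hmono hlim
end
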